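/- Let U_1, …, U_m be nonempty closed convex subsets of R^n whose intersection U satisfies the local error bound condition at the limit point x̄ of the 3PM sequence (x_k): there exist ω ∈ (0,1) and a neighborhood V of x̄ such that ω·dist(x, U) ≤ max_{1≤i≤m} dist(x, U_i) for all x ∈ V. Then (x_k) converges linearly to x̄ with rate at most sqrt(1 − ω²/4). -/

import Mathlib

open Metric Filter Topology

/-- `p` is the metric projection of `z` onto `X`. -/
def IsProj {n : ℕ} (X : Set (EuclideanSpace ℝ (Fin n))) (z p : EuclideanSpace ℝ (Fin n)) : Prop :=
  p ∈ X ∧ ∀ y ∈ X, dist z p ≤ dist z y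

/-!
Each 3PM step is the projection of `x k` onto a polyhedron `Ω k` containing `U = ⋂ i, U i`, so
`‖x k - u‖² ≥ ‖x k - x (k+1)‖² + ‖x (k+1) - u‖²` for `u ∈ U`, and the step length
`‖x k - x (k+1)‖` dominates every `dist (x k) (U i)`. Fejér monotonicity puts the limit `x̄` in `U`
and gives `‖x k - x̄‖ ≤ 2 dist (x k) U`; the error bound then turns the step length into at least
`ω/2 · ‖x k - x̄‖`, and the Fejér inequality at `u = x̄` yields the rate `√(1 - ω²/4)`.
-/

section InnerProductSpace

variable {F : Type*} [NormedAddCommGroup F] [InnerProductSpace ℝ F]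

theorem sq_norm_sub_add_sq_norm_sub_le_of_inner_le_zero {z q y : F}
    (h : inner ℝ (z - q) (y - q) ≤ 0) : ‖z - q‖ ^ 2 + ‖q - y‖ ^ 2 ≤ ‖z - y‖ ^ 2 := by
  have hsq := norm_sub_sq_real (z - q) (y - q)
  rw [sub_sub_sub_cancel_right, ← norm_sub_rev q y] at hsq
  linarith

theorem norm_sub_le_of_inner_le_zero {z q y : F} (h : inner ℝ (z - q) (y - q) ≤ 0) :
    ‖z - q‖ ≤ ‖z - y‖ :=
  (sq_le_sq₀ (norm_nonneg _) (norm_nonneg _)).1 <| by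
    nlinarith [sq_norm_sub_add_sq_norm_sub_le_of_inner_le_zero h, sq_nonneg ‖q - y‖]

theorem convex_setOf_inner_sub_le_zero (v q : F) :
    Convex ℝ {z : F | inner ℝ v (z - q) ≤ 0} := by
  simpa only [inner_sub_right, sub_nonpos, innerₛₗ_apply_apply] using
    convex_halfSpace_le (innerₛₗ ℝ v).isLinear (inner ℝ v q)

end InnerProductSpace

theorem dist_le_two_mul_infDist_of_tendsto {α : Type*} [PseudoMetricSpace α] {S : Set α}
    {x : ℕ → α} {a : α} (hS : S.Nonempty) (hfejer : ∀ u ∈ S, Antitone fun k ↦ dist (x k) u)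
    (hx : Tendsto x atTop (𝓝 a)) (k : ℕ) : dist (x k) a ≤ 2 * infDist (x k) S := by
  have hhalf : dist (x k) a / 2 ≤ infDist (x k) S := by
    refine (le_infDist hS).2 fun u hu ↦ ?_
    have hau : dist a u ≤ dist (x k) u := (hfejer u hu).le_of_tendsto (hx.dist tendsto_const_nhds) k
    linarith [dist_triangle_right (x k) a u]
  linarith

theorem le_sqrt_one_sub_sq_div_four_mul {a b c d : ℝ} (ha : 0 ≤ a) (hc : 0 ≤ c)
    (hpyth : d ^ 2 + b ^ 2 ≤ a ^ 2) (hd : c * a ≤ 2 * d) : b ≤ √(1 - c ^ 2 / 4) * a := by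
  have hcd : (c * a) ^ 2 ≤ (2 * d) ^ 2 := pow_le_pow_left₀ (mul_nonneg hc ha) hd 2
  calc b ≤ √((1 - c ^ 2 / 4) * a ^ 2) := (le_abs_self b).trans (Real.abs_le_sqrt (by nlinarith))
    _ = √(1 - c ^ 2 / 4) * a := by rw [Real.sqrt_mul' _ (sq_nonneg a), Real.sqrt_sq ha]

theorem IsProj.inner_sub_le_zero {n : ℕ} {X : Set (EuclideanSpace ℝ (Fin n))} (hX : Convex ℝ X)
    {z q : EuclideanSpace ℝ (Fin n)} (h : IsProj X z q) :
    ∀ w ∈ X, inner ℝ (z - q) (w - q) ≤ (0 : ℝ) := by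
  have : Nonempty X := ⟨⟨q, h.1⟩⟩
  rw [← norm_eq_iInf_iff_real_inner_le_zero hX h.1]
  refine le_antisymm (le_ciInf fun w ↦ ?_) (ciInf_le ⟨0, ?_⟩ (⟨q, h.1⟩ : X))
  · simpa only [dist_eq_norm] using h.2 w w.2
  · rintro _ ⟨w, rfl⟩
    exact norm_nonneg _

section ThreePM

variable {n m : ℕ} {U : Fin m → Set (EuclideanSpace ℝ (Fin n))}

theorem norm_sub_le_of_threePM_step {z y : EuclideanSpace ℝ (Fin n)}
    {q : Fin m → EuclideanSpace ℝ (Fin n)}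
    (hy : IsProj (⋂ i, {w | inner ℝ (z - q i) (w - q i) ≤ (0 : ℝ)}) z y) (i : Fin m) :
    ‖z - q i‖ ≤ ‖z - y‖ :=
  norm_sub_le_of_inner_le_zero (Set.mem_iInter.1 hy.1 i)

theorem threePM_step_fejer (hcv : ∀ i, Convex ℝ (U i)) {z y u : EuclideanSpace ℝ (Fin n)}
    {q : Fin m → EuclideanSpace ℝ (Fin n)} (hq : ∀ i, IsProj (U i) z (q i))
    (hy : IsProj (⋂ i, {w | inner ℝ (z - q i) (w - q i) ≤ (0 : ℝ)}) z y) (hu : u ∈ ⋂ i, U i) :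
    ‖z - y‖ ^ 2 + ‖y - u‖ ^ 2 ≤ ‖z - u‖ ^ 2 := by
  have huΩ : u ∈ ⋂ i, {w | inner ℝ (z - q i) (w - q i) ≤ (0 : ℝ)} :=
    Set.mem_iInter.2 fun i ↦ (hq i).inner_sub_le_zero (hcv i) u (Set.mem_iInter.1 hu i)
  have hΩ : Convex ℝ (⋂ i, {w | inner ℝ (z - q i) (w - q i) ≤ (0 : ℝ)}) :=
    convex_iInter fun i ↦ convex_setOf_inner_sub_le_zero _ _
  exact sq_norm_sub_add_sq_norm_sub_le_of_inner_le_zero (hy.inner_sub_le_zero hΩ u huΩ)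

theorem threePM_limit_mem (hcl : ∀ i, IsClosed (U i)) {x : ℕ → EuclideanSpace ℝ (Fin n)}
    {p : ℕ → Fin m → EuclideanSpace ℝ (Fin n)} (hp : ∀ k i, IsProj (U i) (x k) (p k i))
    (hstep : ∀ k, IsProj
      (⋂ i, {z : EuclideanSpace ℝ (Fin n) | inner ℝ (x k - p k i) (z - p k i) ≤ (0 : ℝ)})
      (x k) (x (k + 1)))
    {xbar : EuclideanSpace ℝ (Fin n)} (hlim : Tendsto x atTop (𝓝 xbar)) : xbar ∈ ⋂ i, U i := by
  have hsteps : Tendsto (fun k ↦ ‖x k - x (k + 1)‖) atTop (𝓝 0) := by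
    simpa using (hlim.sub (hlim.comp (tendsto_add_atTop_nat 1))).norm
  refine Set.mem_iInter.2 fun i ↦ ?_
  have hgap : Tendsto (fun k ↦ p k i - x k) atTop (𝓝 0) :=
    squeeze_zero_norm (fun k ↦ norm_sub_rev (p k i) (x k) ▸ norm_sub_le_of_threePM_step (hstep k) i)
      hsteps
  have hproj : Tendsto (fun k ↦ p k i) atTop (𝓝 xbar) := by simpa using hlim.add hgap
  exact (hcl i).mem_of_tendsto hproj (Eventually.of_forall fun k ↦ (hp k i).1)

end ThreePM

theorem stmt7_general {n m : ℕ} (U : Fin m → Set (EuclideanSpace ℝ (Fin n)))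
    (hcl : ∀ i, IsClosed (U i)) (hcv : ∀ i, Convex ℝ (U i))
    (x : ℕ → EuclideanSpace ℝ (Fin n)) (p : ℕ → Fin m → EuclideanSpace ℝ (Fin n))
    (hp : ∀ k i, IsProj (U i) (x k) (p k i))
    (hstep : ∀ k, IsProj
      (⋂ i, {z : EuclideanSpace ℝ (Fin n) | inner ℝ (x k - p k i) (z - p k i) ≤ (0 : ℝ)})
      (x k) (x (k + 1)))
    (xbar : EuclideanSpace ℝ (Fin n)) (hlim : Tendsto x atTop (nhds xbar))
    (ω : ℝ) (hω : ω ∈ Set.Ioo (0 : ℝ) 1)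
    (V : Set (EuclideanSpace ℝ (Fin n))) (hV : V ∈ nhds xbar)
    (hEB : ∀ y ∈ V, ω * Metric.infDist y (⋂ i, U i) ≤ ⨆ i : Fin m, Metric.infDist y (U i)) :
    ∃ N : ℕ, ∀ k ≥ N,
      ‖x (k + 1) - xbar‖ ≤ Real.sqrt (1 - ω ^ 2 / 4) * ‖x k - xbar‖ := by
  have hfejer k {u} (hu : u ∈ ⋂ i, U i) := threePM_step_fejer hcv (hp k) (hstep k) hu
  have hxbar : xbar ∈ ⋂ i, U i := threePM_limit_mem hcl hp hstep hlim
  have hdist k : ‖x k - xbar‖ ≤ 2 * infDist (x k) (⋂ i, U i) := by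
    refine dist_eq_norm (x k) xbar ▸ dist_le_two_mul_infDist_of_tendsto ⟨xbar, hxbar⟩
      (fun u hu ↦ antitone_nat_of_succ_le fun k ↦ ?_) hlim k
    simp only [dist_eq_norm]
    nlinarith [hfejer k hu, norm_nonneg (x (k + 1) - u), norm_nonneg (x k - u)]
  obtain ⟨N, hN⟩ := eventually_atTop.1 (hlim.eventually_mem hV)
  refine ⟨N, fun k hk ↦ le_sqrt_one_sub_sq_div_four_mul (norm_nonneg _) hω.1.le
    (hfejer k hxbar) ?_⟩
  have hmaxdist : ⨆ i, infDist (x k) (U i) ≤ ‖x k - x (k + 1)‖ :=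
    Real.iSup_le (fun i ↦ (infDist_le_dist_of_mem (hp k i).1).trans_eq (dist_eq_norm _ _) |>.trans
      (norm_sub_le_of_threePM_step (hstep k) i)) (norm_nonneg _)
  nlinarith [hEB (x k) (hN k hk), hdist k, hω.1]

/-- Linear convergence of 3PM under the local error bound condition. -/
theorem stmt7 {n m : ℕ} (hm : 0 < m) (U : Fin m → Set (EuclideanSpace ℝ (Fin n)))
    (hne : ∀ i, (U i).Nonempty) (hcl : ∀ i, IsClosed (U i)) (hcv : ∀ i, Convex ℝ (U i))
    (hU : (⋂ i, U i).Nonempty)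
    (x : ℕ → EuclideanSpace ℝ (Fin n)) (p : ℕ → Fin m → EuclideanSpace ℝ (Fin n))
    (hp : ∀ k i, IsProj (U i) (x k) (p k i))
    (hstep : ∀ k, IsProj
      (⋂ i, {z : EuclideanSpace ℝ (Fin n) | inner ℝ (x k - p k i) (z - p k i) ≤ (0 : ℝ)})
      (x k) (x (k + 1)))
    (xbar : EuclideanSpace ℝ (Fin n)) (hlim : Tendsto x atTop (nhds xbar))
    (ω : ℝ) (hω : ω ∈ Set.Ioo (0 : ℝ) 1)
    (V : Set (EuclideanSpace ℝ (Fin n))) (hV : V ∈ nhds xbar)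
    (hEB : ∀ y ∈ V, ω * Metric.infDist y (⋂ i, U i) ≤ ⨆ i : Fin m, Metric.infDist y (U i)) :
    ∃ N : ℕ, ∀ k ≥ N,
      ‖x (k + 1) - xbar‖ ≤ Real.sqrt (1 - ω ^ 2 / 4) * ‖x k - xbar‖ :=
  stmt7_general U hcl hcv x p hp hstep xbar hlim ω hω V hV hEB
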